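/- Let n ≥ 2, let Ω_m and Ω be open bounded subsets of ℝⁿ with the closure of Ω_m contained in Ω, and set Ω_b = Ω \ closure(Ω_m). Let σ_i, σ_e > 0 and c ∈ ℝ, and let u : ℝⁿ → ℝ be twice continuously differentiable with compact support contained in Ω_m. Define u_e := u on Ω_m, u_i := −(σ_e/σ_i) u + c on Ω_m, and u_b := 0 on Ω_b. Then: (i) σ_i Δu_i + σ_e Δu_e = 0 at every point of Ω_m (so Δ_i u_i + Δ_e u_e = 0 with Δ_i = −σ_i Δ, Δ_e = −σ_e Δ); (ii) Δu_b = 0 on Ω_b and u_b together with all its derivatives vanishes on ∂Ω; (iii) u_e and its gradient ∇u_e vanish on a neighborhood of ∂Ω_m, u_i = c and ∇u_i = 0 on a neighborhood of ∂Ω_m. Consequently the triple (u_i, u_e, u_b) satisfies all the equations of the homogeneous steady bidomain transmission problem: the transmission conditions u_e = u_b, σ_e ∂u_e/∂ν_i = −σ_b ∂u_b/∂ν_e and σ_i ∂u_i/∂ν_i = 0 on ∂Ω_m, and u_b = 0, ∂u_b/∂ν_e = 0 on ∂Ω. -/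

import Mathlib

/-! `pderiv'` and `Lap` commute with affine maps `f ↦ a * f + c` unconditionally (`deriv` of a
non-differentiable slice is `0` on both sides) and depend only on the germ of a function. So
`Δu_i = -(σe / σi) Δu`, which gives (i), and since `u` vanishes on the open set
`(tsupport u)ᶜ ⊇ ∂Ω_m`, so do `u_e`, `u_i - c` and their partial derivatives there. -/

/-- Partial derivative in the `i`-th coordinate direction, via the derivative of the
coordinate slice (equal to the classical partial derivative whenever it exists). -/
noncomputable def pderiv' {n : ℕ} (i : Fin n) (f : (Fin n → ℝ) → ℝ)
    (x : Fin n → ℝ) : ℝ :=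
  deriv (fun t : ℝ => f (Function.update x i t)) (x i)

/-- The standard Laplacian Δu = ∑_p ∂²u/∂x_p². -/
noncomputable def Lap {n : ℕ} (u : (Fin n → ℝ) → ℝ) (x : Fin n → ℝ) : ℝ :=
  ∑ p, pderiv' p (fun y => pderiv' p u y) x

section

variable {n : ℕ} (i : Fin n) (x : Fin n → ℝ)

theorem pderiv'_zero : pderiv' i 0 x = 0 := by
  simp [pderiv']

theorem Lap_zero : Lap 0 x = 0 := by
  simp [Lap, pderiv']

theorem pderiv'_const_mul_add (a c : ℝ) (f : (Fin n → ℝ) → ℝ) :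
    pderiv' i (fun y => a * f y + c) x = a * pderiv' i f x := by
  simp only [pderiv', deriv_add_const, deriv_const_mul_field]

theorem Lap_const_mul_add (a c : ℝ) (f : (Fin n → ℝ) → ℝ) :
    Lap (fun y => a * f y + c) x = a * Lap f x := by
  simp only [Lap, Finset.mul_sum, pderiv'_const_mul_add]
  refine Finset.sum_congr rfl fun p _ => ?_
  simpa using pderiv'_const_mul_add p x a 0 (pderiv' p f)

theorem pderiv'_congr_of_eventuallyEq {f g : (Fin n → ℝ) → ℝ} (h : f =ᶠ[nhds x] g) :
    pderiv' i f x = pderiv' i g x := by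
  have hslice : Filter.Tendsto (fun t : ℝ => Function.update x i t) (nhds (x i)) (nhds x) :=
    (continuous_const.update i continuous_id).tendsto' _ _ (Function.update_eq_self i x)
  exact Filter.EventuallyEq.deriv_eq (hslice.eventually h)

theorem pderiv'_eq_zero_of_notMem_tsupport {f : (Fin n → ℝ) → ℝ} (hx : x ∉ tsupport f) :
    pderiv' i f x = 0 := by
  rw [pderiv'_congr_of_eventuallyEq i x (notMem_tsupport_iff_eventuallyEq.mp hx)]
  exact pderiv'_zero i x

end

theorem bidomain_nullspace_triple_general (n : ℕ)
    (Ωm Ω : Set (Fin n → ℝ)) (hΩm : IsOpen Ωm)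
    (Ωb : Set (Fin n → ℝ))
    (σi σe σb : ℝ) (hσi : 0 < σi) (c : ℝ)
    (u : (Fin n → ℝ) → ℝ)
    (husupp : tsupport u ⊆ Ωm)
    (ue ui ub : (Fin n → ℝ) → ℝ)
    (hue : ue = u) (hui : ui = fun x => -(σe / σi) * u x + c) (hub : ub = 0) :
    (∀ x ∈ Ωm, σi * Lap ui x + σe * Lap ue x = 0) ∧
    (∀ x ∈ Ωb, Lap ub x = 0) ∧
    (∀ k : ℕ, ∀ x ∈ frontier Ω, iteratedFDeriv ℝ k ub x = 0) ∧
    (∃ U : Set (Fin n → ℝ), IsOpen U ∧ frontier Ωm ⊆ U ∧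
      ∀ x ∈ U, ue x = 0 ∧ (∀ m, pderiv' m ue x = 0) ∧
        ui x = c ∧ (∀ m, pderiv' m ui x = 0)) ∧
    (∀ x ∈ frontier Ωm, ue x = ub x) ∧
    (∀ x ∈ frontier Ωm, ∀ m, σe * pderiv' m ue x = -(σb * pderiv' m ub x)) ∧
    (∀ x ∈ frontier Ωm, ∀ m, σi * pderiv' m ui x = 0) ∧
    (∀ x ∈ frontier Ω, ub x = 0 ∧ ∀ m, σb * pderiv' m ub x = 0) := by
  subst ue ui ub
  have hfront : frontier Ωm ⊆ (tsupport u)ᶜ :=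
    ((disjoint_frontier_iff_isOpen.mpr hΩm).mono_right husupp).subset_compl_right
  have hzero : ∀ x ∉ tsupport u, u x = 0 ∧ ∀ m, pderiv' m u x = 0 := fun x hx =>
    ⟨image_eq_zero_of_notMem_tsupport hx, fun m => pderiv'_eq_zero_of_notMem_tsupport m x hx⟩
  refine ⟨fun x _ => ?_, fun x _ => Lap_zero x, fun k x _ => by simp [iteratedFDeriv_zero],
    ⟨(tsupport u)ᶜ, (isClosed_tsupport u).isOpen_compl, hfront, fun x hx => ?_⟩,
    fun x hx => (hzero x (hfront hx)).1, fun x hx m => ?_, fun x hx m => ?_,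
    fun x _ => ⟨rfl, fun m => by simp [pderiv'_zero]⟩⟩
  · rw [Lap_const_mul_add]
    field_simp
    ring
  · obtain ⟨hu0, hdu0⟩ := hzero x hx
    exact ⟨hu0, hdu0, by simp [hu0], fun m => by rw [pderiv'_const_mul_add, hdu0, mul_zero]⟩
  · simp [pderiv'_zero, (hzero x (hfront hx)).2]
  · rw [pderiv'_const_mul_add, (hzero x (hfront hx)).2, mul_zero, mul_zero]

/-- for u ∈ C² compactly supported in Ω_m, σ_i, σ_e > 0 and c ∈ ℝ, the
triple u_e = u, u_i = −(σ_e/σ_i)u + c, u_b = 0 lies in the null-space of the homogeneous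
steady bidomain transmission problem: (i) σ_i Δu_i + σ_e Δu_e = 0 in Ω_m; (ii) Δu_b = 0
in Ω_b and u_b vanishes with all its derivatives on ∂Ω; (iii) u_e, ∇u_e vanish and
u_i = c, ∇u_i = 0 on a neighborhood of ∂Ω_m; consequently the transmission conditions
u_e = u_b, σ_e ∂u_e/∂ν = −σ_b ∂u_b/∂ν, σ_i ∂u_i/∂ν = 0 on ∂Ω_m and u_b = 0,
σ_b ∂u_b/∂ν = 0 on ∂Ω all hold. -/
theorem bidomain_nullspace_triple (n : ℕ) (hn : 2 ≤ n)
    (Ωm Ω : Set (Fin n → ℝ)) (hΩm : IsOpen Ωm) (hΩ : IsOpen Ω)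
    (hbm : Bornology.IsBounded Ωm) (hb : Bornology.IsBounded Ω)
    (hsub : closure Ωm ⊆ Ω)
    (Ωb : Set (Fin n → ℝ)) (hΩb : Ωb = Ω \ closure Ωm)
    (σi σe σb : ℝ) (hσi : 0 < σi) (hσe : 0 < σe) (hσb : 0 < σb) (c : ℝ)
    (u : (Fin n → ℝ) → ℝ) (hu : ContDiff ℝ 2 u) (hucompact : HasCompactSupport u)
    (husupp : tsupport u ⊆ Ωm)
    (ue ui ub : (Fin n → ℝ) → ℝ)
    (hue : ue = u) (hui : ui = fun x => -(σe / σi) * u x + c) (hub : ub = 0) :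
    (∀ x ∈ Ωm, σi * Lap ui x + σe * Lap ue x = 0) ∧
    (∀ x ∈ Ωb, Lap ub x = 0) ∧
    (∀ k : ℕ, ∀ x ∈ frontier Ω, iteratedFDeriv ℝ k ub x = 0) ∧
    (∃ U : Set (Fin n → ℝ), IsOpen U ∧ frontier Ωm ⊆ U ∧
      ∀ x ∈ U, ue x = 0 ∧ (∀ m, pderiv' m ue x = 0) ∧
        ui x = c ∧ (∀ m, pderiv' m ui x = 0)) ∧
    (∀ x ∈ frontier Ωm, ue x = ub x) ∧
    (∀ x ∈ frontier Ωm, ∀ m, σe * pderiv' m ue x = -(σb * pderiv' m ub x)) ∧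
    (∀ x ∈ frontier Ωm, ∀ m, σi * pderiv' m ui x = 0) ∧
    (∀ x ∈ frontier Ω, ub x = 0 ∧ ∀ m, σb * pderiv' m ub x = 0) :=
  bidomain_nullspace_triple_general n Ωm Ω hΩm Ωb σi σe σb hσi c u husupp ue ui ub hue hui hub
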